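/- Let B = [[α₁, r, s], [0, α₂, t], [0, 0, α₃]] ∈ ℂ^{3×3} with r·s·t ≠ 0, and let F be the set of λ ∈ ℂ such that the smallest eigenvalue of the Hermitian matrix (λI − B)ᴴ(λI − B) has multiplicity at least 2 (i.e., the two smallest of its three eigenvalues, counted with multiplicity, are equal). Then F contains at most one point, and every λ ∈ F satisfies λ ≠ α₂ and arg(α₂ − λ) = arg(r·conj(s)·t); equivalently, there exists a real ρ > 0 with α₂ − λ = ρ·(r·conj(s)·t). -/

import Mathlib

open Matrix

/-- The eigenvalues (squares of the singular values) of `λI - B`, i.e. the eigenvalues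
of the Hermitian matrix `(λI - B)ᴴ (λI - B)`, counted with multiplicity. -/
noncomputable def sqSingVals {n : ℕ} (B : Matrix (Fin n) (Fin n) ℂ) (lam : ℂ) :
    Fin n → ℝ :=
  (Matrix.isHermitian_conjTranspose_mul_self
    (lam • (1 : Matrix (Fin n) (Fin n) ℂ) - B)).eigenvalues

/-- The smallest eigenvalue of `(λI - B)ᴴ (λI - B)` has multiplicity at least 2:
it is attained at two distinct indices. -/
def SmallestEigMultTwo {n : ℕ} (B : Matrix (Fin n) (Fin n) ℂ) (lam : ℂ) : Prop :=
  ∃ i j : Fin n, i ≠ j ∧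
    sqSingVals B lam i = (⨅ r, sqSingVals B lam r) ∧
    sqSingVals B lam j = (⨅ r, sqSingVals B lam r)

/-
If the smallest eigenvalue `μ` of `MᴴM`, `M = λI - B`, is at least double, then
`MᴴM = μI + vvᴴ` for a vector `v` (a rescaled eigenvector of the remaining eigenvalue).
Write `M = [[a, -r, -s], [0, b, -t], [0, 0, c]]` with `b = λ - α₂`. Since `vvᴴ` has rank one,
its entries off the first row are determined by those on it, which gives
`|v₀|² · conj b · t = -μ · conj r · s`; hence `b = -ρ · r · conj s · t` with
`ρ = μ / (|v₀|² |t|²) > 0`. If `v₀ = 0`, then `a = μ = 0`, `MᴴM = vvᴴ`, and equality in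
Cauchy–Schwarz (Lagrange's identity) forces `rt + bs = 0`, the same ray with `ρ = |s|⁻²`.
Eliminating `μ` and `|v₀|²` from the remaining entries leaves an equation
`ρ · K = |α₂ - α₁|² + |r|²` whose right-hand side is positive, so `ρ`, hence `λ`, is unique.
-/

open Complex ComplexConjugate

theorem Fin.exists_forall_ne_eq_or_eq {i j : Fin 3} (hij : i ≠ j) :
    ∃ k, ∀ m ≠ k, m = i ∨ m = j := by
  revert i j; decide

theorem Matrix.IsHermitian.exists_eq_smul_one_add_vecMulVec {𝕜 : Type*} [RCLike 𝕜] {n : Type*}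
    [Fintype n] [DecidableEq n] {A : Matrix n n 𝕜} (hA : A.IsHermitian) {c : ℝ} {k : n}
    (hc : c ≤ hA.eigenvalues k) (he : ∀ m ≠ k, hA.eigenvalues m = c) :
    ∃ v : n → 𝕜, A = (c : 𝕜) • 1 + vecMulVec v (star v) := by
  set U : Matrix n n 𝕜 := (hA.eigenvectorUnitary : Matrix n n 𝕜)
  set w : n → 𝕜 := Pi.single k (Real.sqrt (hA.eigenvalues k - c) : 𝕜)
  have hD : diagonal (RCLike.ofReal ∘ hA.eigenvalues) = (c : 𝕜) • 1 + vecMulVec w (star w) := by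
    ext i j
    rcases eq_or_ne i j with rfl | hij
    · rcases eq_or_ne i k with rfl | hik
      · simp [w, vecMulVec_apply, ← RCLike.ofReal_mul, Real.mul_self_sqrt (sub_nonneg.2 hc),
          RCLike.real_smul_eq_coe_mul]
      · simp [w, vecMulVec_apply, hik, he i hik, RCLike.real_smul_eq_coe_mul]
    · simp [w, vecMulVec_apply, hij, Pi.single_apply]
      grind
  refine ⟨U *ᵥ w, ?_⟩
  have hU : U * star U = 1 := Unitary.mul_star_self_of_mem hA.eigenvectorUnitary.2
  conv_lhs => rw [hA.spectral_theorem, Unitary.conjStarAlgAut_apply, hD]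
  rw [mul_add, add_mul, mul_smul_comm, smul_mul_assoc, mul_one, hU, mul_vecMulVec, vecMulVec_mul,
    star_mulVec]
  rfl

theorem SmallestEigMultTwo.exists_eq_smul_one_add_vecMulVec {B : Matrix (Fin 3) (Fin 3) ℂ}
    {lam : ℂ} (h : SmallestEigMultTwo B lam) :
    ∃ μ : ℝ, 0 ≤ μ ∧ ∃ v : Fin 3 → ℂ,
      (lam • 1 - B)ᴴ * (lam • 1 - B) = (μ : ℂ) • 1 + vecMulVec v (star v) := by
  obtain ⟨i, j, hij, hi, hj⟩ := h
  obtain ⟨k, hk⟩ := Fin.exists_forall_ne_eq_or_eq hij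
  refine ⟨_, hi ▸ eigenvalues_conjTranspose_mul_self_nonneg _ i,
    (isHermitian_conjTranspose_mul_self _).exists_eq_smul_one_add_vecMulVec
      (ciInf_le (Finite.bddBelow_range _) k) fun m hm => ?_⟩
  rcases hk m hm with rfl | rfl
  exacts [hi, hj]

theorem smul_one_sub_upperTriangular (lam α₁ α₂ α₃ r s t : ℂ) :
    lam • (1 : Matrix (Fin 3) (Fin 3) ℂ) - !![α₁, r, s; 0, α₂, t; 0, 0, α₃]
      = !![lam - α₁, -r, -s; 0, lam - α₂, -t; 0, 0, lam - α₃] := by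
  ext i j; fin_cases i <;> fin_cases j <;> simp [one_apply]

theorem Complex.normSq_add_normSq_mul_normSq_add_normSq (r b s t : ℂ) :
    (normSq r + normSq b) * (normSq s + normSq t)
      = normSq (conj r * s - conj b * t) + normSq (r * t + b * s) := by
  simp only [normSq_apply, mul_re, mul_im, sub_re, sub_im, add_re, add_im, conj_re, conj_im]
  ring

/- The hypotheses `hpq` are the `(p, q)` entries of `MᴴM = μ • 1 + vecMulVec v (star v)` for
`M = !![a, -r, -s; 0, b, -t; 0, 0, c]` and `v = ![v₀, v₁, v₂]`. -/
namespace UpperTriangularGram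

variable {a b c r s t v₀ v₁ v₂ : ℂ} {μ : ℝ}

theorem normSq_mul_conj_mul_eq (h00 : normSq a = μ + normSq v₀)
    (h01 : conj a * r = -(v₀ * conj v₁)) (h02 : conj a * s = -(v₀ * conj v₂))
    (h12 : conj r * s - conj b * t = v₁ * conj v₂) :
    (normSq v₀ : ℂ) * (conj b * t) = -μ * (conj r * s) := by
  -- rank one: `|v₀|² (v₁ conj v₂) = (conj v₀ v₁) (v₀ conj v₂)`
  have h01' : a * conj r = -(conj v₀ * v₁) := by simpa using congrArg conj h01
  have h00' : a * conj a = μ + v₀ * conj v₀ := by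
    rw [mul_conj, mul_conj]; exact_mod_cast h00
  rw [← mul_conj]
  linear_combination (-(v₀ * conj v₀)) * h12 - conj v₂ * v₀ * h01' + a * conj r * h02
    - conj r * s * h00'

theorem normSq_mul_normSq_eq (h : conj a * r = -(v₀ * conj v₁)) :
    normSq v₀ * normSq v₁ = normSq a * normSq r := by
  simpa using congrArg normSq h.symm

theorem exists_ray_of_eq_zero (hr : r ≠ 0) (hs : s ≠ 0)
    (h00 : normSq a = μ + normSq v₀) (h01 : conj a * r = -(v₀ * conj v₁))
    (h11 : normSq r + normSq b = μ + normSq v₁) (h12 : conj r * s - conj b * t = v₁ * conj v₂)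
    (h22 : normSq s + normSq t + normSq c = μ + normSq v₂) (hv₀ : v₀ = 0) :
    ∃ ρ : ℝ, 0 < ρ ∧ b = -(ρ * (r * conj s * t)) ∧ μ = ρ * normSq v₀ * normSq t ∧
      normSq v₀ + normSq r = ρ * normSq r * normSq s := by
  subst hv₀
  have ha : a = 0 := by simpa [hr] using h01
  have hμ0 : μ = 0 := by simpa [ha] using h00.symm
  -- `MᴴM = vvᴴ` now, so Cauchy–Schwarz for the columns 1 and 2 of `M` is an equality
  have hrt : r * t + b * s = 0 := by
    have h := congrArg normSq h12
    rw [normSq_mul, normSq_conj] at h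
    have hY : normSq (r * t + b * s) = -((normSq r + normSq b) * normSq c) := by
      subst hμ0
      linear_combination -normSq_add_normSq_mul_normSq_add_normSq r b s t - h
        + normSq v₂ * h11 + (normSq r + normSq b) * h22
    refine normSq_eq_zero.1 (le_antisymm ?_ (normSq_nonneg _))
    rw [hY, neg_nonpos]
    exact mul_nonneg (add_nonneg (normSq_nonneg r) (normSq_nonneg b)) (normSq_nonneg c)
  have hns := (normSq_pos.2 hs).ne'
  refine ⟨(normSq s)⁻¹, inv_pos.2 (normSq_pos.2 hs), ?_, by simp [hμ0], ?_⟩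
  · rw [ofReal_inv, ← inv_mul_cancel_left₀ (ofReal_ne_zero.2 hns) b, ← mul_neg, ← mul_conj]
    congr 1
    linear_combination conj s * hrt
  · rw [normSq_zero, zero_add, mul_right_comm, inv_mul_cancel₀ hns, one_mul]

theorem exists_ray_of_ne_zero (ht : t ≠ 0) (hμ : 0 ≤ μ)
    (h00 : normSq a = μ + normSq v₀) (h01 : conj a * r = -(v₀ * conj v₁))
    (h02 : conj a * s = -(v₀ * conj v₂)) (h11 : normSq r + normSq b = μ + normSq v₁)
    (h12 : conj r * s - conj b * t = v₁ * conj v₂)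
    (h22 : normSq s + normSq t + normSq c = μ + normSq v₂) (hv₀ : v₀ ≠ 0) :
    ∃ ρ : ℝ, 0 < ρ ∧ b = -(ρ * (r * conj s * t)) ∧ μ = ρ * normSq v₀ * normSq t ∧
      normSq v₀ + normSq r = ρ * normSq r * normSq s := by
  have hx := normSq_pos.2 hv₀
  have hnt := normSq_pos.2 ht
  have hμ_pos : 0 < μ := by
    refine hμ.lt_of_ne fun hμ0 => ?_
    have h : normSq v₀ * (normSq t + normSq c) = 0 := by
      linear_combination normSq v₀ * h22 + normSq_mul_normSq_eq h02 + normSq s * h00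
        - (normSq s + normSq v₀) * hμ0
    nlinarith [normSq_nonneg c]
  have hbμ : ((normSq v₀ * normSq t : ℝ) : ℂ) * b = -(μ * (r * conj s * t)) := by
    have h := congrArg conj (normSq_mul_conj_mul_eq h00 h01 h02 h12)
    simp only [map_mul, map_neg, conj_ofReal, conj_conj] at h
    push_cast
    rw [← mul_conj t]
    linear_combination t * h
  obtain ⟨ρ, hρ⟩ : ∃ ρ, ρ = μ / (normSq v₀ * normSq t) := ⟨_, rfl⟩
  have hμρ : μ = ρ * normSq v₀ * normSq t := by
    rw [hρ]; field_simp
  have hb : b = -(ρ * (r * conj s * t)) := by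
    have : ((normSq v₀ * normSq t : ℝ) : ℂ) ≠ 0 := by exact_mod_cast (mul_pos hx hnt).ne'
    rw [hρ, ofReal_div]
    field_simp
    linear_combination hbμ
  refine ⟨ρ, by rw [hρ]; positivity, hb, hμρ, ?_⟩
  have hnb : normSq b = ρ ^ 2 * (normSq r * normSq s * normSq t) := by
    rw [hb]
    simp only [normSq_neg, normSq_mul, normSq_ofReal, normSq_conj]
    ring
  have h : ρ * normSq v₀ * normSq t * (normSq v₀ + normSq r - ρ * normSq r * normSq s) = 0 := by
    linear_combination -(normSq v₀ + normSq r) * hμρ + normSq v₀ * hnb - normSq v₀ * h11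
      - normSq_mul_normSq_eq h01 - normSq r * h00
  have hρx : ρ * normSq v₀ * normSq t ≠ 0 := by rw [← hμρ]; exact hμ_pos.ne'
  linear_combination (mul_eq_zero.1 h).resolve_left hρx

theorem mul_eq_normSq_sub_add_normSq {x ρ : ℝ} (hb : b = -(ρ * (r * conj s * t)))
    (h00 : normSq a = μ + x) (hμ : μ = ρ * x * normSq t)
    (hx : x + normSq r = ρ * normSq r * normSq s) :
    ρ * (normSq r * normSq s - normSq r * normSq t + 2 * ((a - b) * conj (r * conj s * t)).re)
      = normSq (a - b) + normSq r := by
  have ha : a = (a - b) - ρ * (r * conj s * t) := by rw [hb]; ring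
  have hre : ((a - b) * conj (ρ * (r * conj s * t))).re
      = ρ * ((a - b) * conj (r * conj s * t)).re := by
    rw [map_mul, conj_ofReal, mul_left_comm, re_ofReal_mul]
  rw [ha, normSq_sub, hre, normSq_mul, normSq_ofReal, normSq_mul, normSq_mul, normSq_conj] at h00
  linear_combination -h00 - hμ - (1 + ρ * normSq t) * hx

theorem exists_ray (hr : r ≠ 0) (hs : s ≠ 0) (ht : t ≠ 0) (hμ : 0 ≤ μ)
    (h00 : normSq a = μ + normSq v₀) (h01 : conj a * r = -(v₀ * conj v₁))
    (h02 : conj a * s = -(v₀ * conj v₂)) (h11 : normSq r + normSq b = μ + normSq v₁)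
    (h12 : conj r * s - conj b * t = v₁ * conj v₂)
    (h22 : normSq s + normSq t + normSq c = μ + normSq v₂) :
    ∃ ρ : ℝ, 0 < ρ ∧ b = -(ρ * (r * conj s * t)) ∧
      ρ * (normSq r * normSq s - normSq r * normSq t + 2 * ((a - b) * conj (r * conj s * t)).re)
        = normSq (a - b) + normSq r := by
  obtain ⟨ρ, hρ, hb, hμρ, hx⟩ := if hv₀ : v₀ = 0
    then exists_ray_of_eq_zero hr hs h00 h01 h11 h12 h22 hv₀
    else exists_ray_of_ne_zero ht hμ h00 h01 h02 h11 h12 h22 hv₀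
  exact ⟨ρ, hρ, hb, mul_eq_normSq_sub_add_normSq hb h00 hμρ hx⟩

end UpperTriangularGram

theorem SmallestEigMultTwo.exists_ray {α₁ α₂ α₃ r s t lam : ℂ} (hr : r ≠ 0) (hs : s ≠ 0)
    (ht : t ≠ 0) (h : SmallestEigMultTwo !![α₁, r, s; 0, α₂, t; 0, 0, α₃] lam) :
    ∃ ρ : ℝ, 0 < ρ ∧ α₂ - lam = ρ * (r * conj s * t) ∧
      ρ * (normSq r * normSq s - normSq r * normSq t + 2 * ((α₂ - α₁) * conj (r * conj s * t)).re)
        = normSq (α₂ - α₁) + normSq r := by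
  obtain ⟨μ, hμ, v, h⟩ := h.exists_eq_smul_one_add_vecMulVec
  rw [smul_one_sub_upperTriangular] at h
  have h00 := congrFun₂ h 0 0
  have h01 := congrFun₂ h 0 1
  have h02 := congrFun₂ h 0 2
  have h11 := congrFun₂ h 1 1
  have h12 := congrFun₂ h 1 2
  have h22 := congrFun₂ h 2 2
  simp [-map_sub, mul_apply, Fin.sum_univ_three, vecMulVec_apply, ← normSq_eq_conj_mul_self,
    mul_conj, ← sub_eq_add_neg] at h00 h01 h02 h11 h12 h22
  norm_cast at h00 h11 h22
  rw [neg_eq_iff_eq_neg] at h01 h02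
  obtain ⟨ρ, hρ, hb, hK⟩ := UpperTriangularGram.exists_ray hr hs ht hμ h00 h01 h02 h11 h12 h22
  rw [sub_sub_sub_cancel_left] at hK
  exact ⟨ρ, hρ, by linear_combination -hb, hK⟩

/-- For `B = [[α₁, r, s], [0, α₂, t], [0, 0, α₃]]` with `r·s·t ≠ 0`, the set `F` of
`λ` at which the smallest singular value of `λI - B` is multiple contains at most one
point, and any such `λ` satisfies `α₂ - λ = ρ·(r·conj s·t)` for some real `ρ > 0`
(in particular `λ ≠ α₂` and `arg (α₂ - λ) = arg (r·conj s·t)`). -/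
theorem essential_fault_point_three_by_three
    (α₁ α₂ α₃ r s t : ℂ) (hrst : r * s * t ≠ 0) :
    ({lam : ℂ | SmallestEigMultTwo !![α₁, r, s; 0, α₂, t; 0, 0, α₃] lam}).Subsingleton ∧
    ∀ lam : ℂ, SmallestEigMultTwo !![α₁, r, s; 0, α₂, t; 0, 0, α₃] lam →
      ∃ ρ : ℝ, 0 < ρ ∧ α₂ - lam = (ρ : ℂ) * (r * (starRingEnd ℂ) s * t) := by
  obtain ⟨⟨hr, hs⟩, ht⟩ := mul_ne_zero_iff.1 hrst |>.imp_left mul_ne_zero_iff.1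
  refine ⟨fun l hl l' hl' => ?_, fun lam hlam =>
    (hlam.exists_ray hr hs ht).imp fun _ h => ⟨h.1, h.2.1⟩⟩
  obtain ⟨ρ, -, hl, hK⟩ := SmallestEigMultTwo.exists_ray hr hs ht hl
  obtain ⟨ρ', -, hl', hK'⟩ := SmallestEigMultTwo.exists_ray hr hs ht hl'
  have hC : 0 < normSq (α₂ - α₁) + normSq r :=
    add_pos_of_nonneg_of_pos (normSq_nonneg _) (normSq_pos.2 hr)
  obtain rfl : ρ = ρ' :=
    mul_right_cancel₀ (fun h => by rw [h, mul_zero] at hK; exact hC.ne hK) (hK.trans hK'.symm)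
  linear_combination hl' - hl
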